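/- Let D = ϖ_w(y) for some y ∈ 𝔽_q^n. Then the following are equivalent: (1) diam_{d_w}(B_w(x, D)) = D for all x ∈ 𝔽_q^n; (2) B_w(x, D) is D-optimal for all x ∈ 𝔽_q^n; (3) every D-optimal set A equals B_w(x, D) for some x ∈ 𝔽_q^n; (4) A*_{d_w}(D) = |B_w(0, D)|. -/

import Mathlib

set_option linter.unusedSectionVars false

open scoped Classical

noncomputable section

variable {F : Type*} [Field F] [Fintype F]

def IsWeight (w : F → ℕ) : Prop :=
  (∀ a : F, w a = 0 ↔ a = 0) ∧ (∀ a : F, w (-a) = w a) ∧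
    (∀ a b : F, w (a + b) ≤ w a + w b)

def Mw (w : F → ℕ) : ℕ := Finset.univ.sup w

def mw (w : F → ℕ) : ℕ := sInf {s | ∃ a : F, a ≠ 0 ∧ w a = s}

def rho {n : ℕ} (u : Fin n → F) : ℕ :=
  (Finset.univ.filter fun j => u j ≠ 0).sup fun j => (j : ℕ) + 1

lemma rho_le {n : ℕ} (u : Fin n → F) : rho u ≤ n :=
  Finset.sup_le fun j _ => j.isLt

def chainWeight {n : ℕ} (w : F → ℕ) (u : Fin n → F) : ℕ :=
  if h : rho u = 0 then 0
  else w (u ⟨rho u - 1,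
        lt_of_lt_of_le (Nat.sub_lt (Nat.pos_of_ne_zero h) Nat.one_pos) (rho_le u)⟩)
      + (rho u - 1) * Mw w

def dChain {n : ℕ} (w : F → ℕ) (u v : Fin n → F) : ℕ := chainWeight w (u - v)

def ballW {n : ℕ} (w : F → ℕ) (x : Fin n → F) (r : ℕ) : Finset (Fin n → F) :=
  Finset.univ.filter fun v => dChain w x v ≤ r

def diamW {n : ℕ} (w : F → ℕ) (A : Finset (Fin n → F)) : ℕ :=
  (A ×ˢ A).sup fun p => dChain w p.1 p.2

def AstarW (w : F → ℕ) (n D : ℕ) : ℕ :=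
  Finset.univ.sup fun A : Finset (Fin n → F) => if diamW w A ≤ D then A.card else 0

def winv (w : F → ℕ) (S : ℕ) : Finset F :=
  Finset.univ.filter fun a => a ≠ 0 ∧ w a ≤ S

def dP {n : ℕ} (C : Finset (Fin n → F)) : ℕ :=
  sInf {s | ∃ x ∈ C, ∃ y ∈ C, x ≠ y ∧ rho (x - y) = s}

def dW {n : ℕ} (w : F → ℕ) (C : Finset (Fin n → F)) : ℕ :=
  sInf {s | ∃ x ∈ C, ∃ y ∈ C, x ≠ y ∧ dChain w x y = s}

def floorW (w : F → ℕ) (n D : ℕ) : ℕ :=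
  (Finset.univ.filter fun u : Fin n → F => chainWeight w u < D).sup (chainWeight w)

def nonArch (w : F → ℕ) : Prop := ∀ a b : F, w (a + b) ≤ max (w a) (w b)

def Sw (w : F → ℕ) : ℕ :=
  if nonArch w then Mw w
  else sInf {s | ∃ a b : F, max (w a) (w b) < w (a - b) ∧ max (w a) (w b) = s}

def WwCond (w : F → ℕ) (S : ℕ) (K : Finset F) : Prop :=
  (∀ a ∈ K, Sw w ≤ w a ∧ w a ≤ S) ∧
  (∀ a ∈ K, ∀ b : F, w b ≤ Sw w - 1 → w (a - b) ≤ S) ∧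
  (∀ a ∈ K, ∀ b ∈ K, w (a - b) ≤ S)

def WwCard (w : F → ℕ) (S : ℕ) : ℕ :=
  Finset.univ.sup fun K : Finset F => if WwCond w S K then K.card else 0

def idealOf {n : ℕ} (P : PartialOrder (Fin n)) (u : Fin n → F) : Finset (Fin n) :=
  Finset.univ.filter fun j => ∃ i : Fin n, u i ≠ 0 ∧ P.le j i

def maxOf {n : ℕ} (P : PartialOrder (Fin n)) (u : Fin n → F) : Finset (Fin n) :=
  (idealOf P u).filter fun j => ∀ k ∈ idealOf P u, P.le j k → j = k

def posetWeight {n : ℕ} (P : PartialOrder (Fin n)) (w : F → ℕ) (u : Fin n → F) : ℕ :=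
  (∑ i ∈ maxOf P u, w (u i)) + Mw w * ((idealOf P u) \ (maxOf P u)).card

def dPoset {n : ℕ} (P : PartialOrder (Fin n)) (w : F → ℕ) (u v : Fin n → F) : ℕ :=
  posetWeight P w (u - v)

def ballP {n : ℕ} (P : PartialOrder (Fin n)) (w : F → ℕ) (x : Fin n → F) (r : ℕ) :
    Finset (Fin n → F) :=
  Finset.univ.filter fun v => dPoset P w x v ≤ r

def diamP {n : ℕ} (P : PartialOrder (Fin n)) (w : F → ℕ) (A : Finset (Fin n → F)) : ℕ :=
  (A ×ˢ A).sup fun p => dPoset P w p.1 p.2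

end

/-!
Every ball `B_w(x, D)` is the translate `x + B_w(0, D)`, so all balls share one cardinality and one
diameter, and a set of diameter at most `D` lies in the ball of radius `D` around any of its points.
Hence `A*(D) ≤ |B_w(0, D)|`, with equality exactly when `B_w(0, D)` has diameter at most `D`, and
then every optimal set fills the ball around each of its points. Since `D = ϖ_w(y)`, the point
`x - y` lies in `B_w(x, D)` at distance exactly `D` from `x`, so that diameter is never below `D`.
-/

namespace ChainWeight

variable {F : Type*} [Field F] [Fintype F] {n : ℕ} (w : F → ℕ)

lemma chainWeight_zero : chainWeight w (0 : Fin n → F) = 0 := by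
  simp [chainWeight, rho]

@[simp]
lemma mem_ballW {x v : Fin n → F} {r : ℕ} : v ∈ ballW w x r ↔ dChain w x v ≤ r := by
  simp [ballW]

lemma mem_ballW_self (x : Fin n → F) (r : ℕ) : x ∈ ballW w x r := by
  simp [dChain, chainWeight_zero]

lemma dChain_add_right (a b c : Fin n → F) : dChain w (a + c) (b + c) = dChain w a b := by
  simp [dChain]

lemma ballW_eq_map (x : Fin n → F) (r : ℕ) :
    ballW w x r = (ballW w (0 : Fin n → F) r).map (Equiv.addRight x).toEmbedding := by
  ext v
  simp [dChain, sub_eq_add_neg]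

lemma card_ballW (x : Fin n → F) (r : ℕ) : (ballW w x r).card = (ballW w (0 : Fin n → F) r).card := by
  rw [ballW_eq_map, Finset.card_map]

lemma le_diamW {A : Finset (Fin n → F)} {a b : Fin n → F} (ha : a ∈ A) (hb : b ∈ A) :
    dChain w a b ≤ diamW w A :=
  Finset.le_sup (f := fun p : (Fin n → F) × (Fin n → F) => dChain w p.1 p.2) (s := A ×ˢ A)
    (b := (a, b)) (Finset.mem_product.2 ⟨ha, hb⟩)

lemma diamW_map_addRight (A : Finset (Fin n → F)) (c : Fin n → F) :
    diamW w (A.map (Equiv.addRight c).toEmbedding) = diamW w A := by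
  refine le_antisymm (Finset.sup_le ?_) (Finset.sup_le ?_)
  · rintro ⟨_, _⟩ hp
    obtain ⟨⟨a, ha, rfl⟩, ⟨b, hb, rfl⟩⟩ := by simpa only [Finset.mem_product, Finset.mem_map] using hp
    simpa [dChain_add_right] using le_diamW w ha hb
  · rintro ⟨a, b⟩ hp
    obtain ⟨ha, hb⟩ := Finset.mem_product.1 hp
    rw [← dChain_add_right w a b c]
    exact le_diamW w (Finset.mem_map_of_mem _ ha) (Finset.mem_map_of_mem _ hb)

lemma diamW_ballW (x : Fin n → F) (r : ℕ) :
    diamW w (ballW w x r) = diamW w (ballW w (0 : Fin n → F) r) := by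
  rw [ballW_eq_map, diamW_map_addRight]

lemma le_diamW_ballW {y : Fin n → F} (x : Fin n → F) :
    chainWeight w y ≤ diamW w (ballW w x (chainWeight w y)) := by
  have hdist : dChain w x (x - y) = chainWeight w y := by simp [dChain]
  exact hdist ▸ le_diamW w (mem_ballW_self w x _) (by simp [hdist])

lemma subset_ballW_of_diamW_le {A : Finset (Fin n → F)} {D : ℕ} (hA : diamW w A ≤ D)
    {a : Fin n → F} (ha : a ∈ A) : A ⊆ ballW w a D :=
  fun _ hv => (mem_ballW w).2 ((le_diamW w ha hv).trans hA)

lemma exists_eq_ballW_of_card_le {A : Finset (Fin n → F)} {D : ℕ} (hA : diamW w A ≤ D)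
    (hcard : (ballW w (0 : Fin n → F) D).card ≤ A.card) : ∃ a, A = ballW w a D := by
  obtain ⟨a, ha⟩ : A.Nonempty :=
    Finset.card_pos.1 ((Finset.card_pos.2 ⟨0, mem_ballW_self w 0 D⟩).trans_le hcard)
  refine ⟨a, Finset.eq_of_subset_of_card_le (subset_ballW_of_diamW_le w hA ha) ?_⟩
  rwa [card_ballW]

lemma card_le_AstarW {A : Finset (Fin n → F)} {D : ℕ} (hA : diamW w A ≤ D) :
    A.card ≤ AstarW w n D := by
  have h := Finset.le_sup (f := fun A : Finset (Fin n → F) =>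
    if diamW w A ≤ D then A.card else 0) (Finset.mem_univ A)
  rwa [if_pos hA] at h

lemma AstarW_le_card_ballW (D : ℕ) : AstarW w n D ≤ (ballW w (0 : Fin n → F) D).card := by
  refine Finset.sup_le fun A _ => ?_
  split_ifs with hA
  · rcases A.eq_empty_or_nonempty with rfl | ⟨a, ha⟩
    · simp
    · exact (Finset.card_le_card (subset_ballW_of_diamW_le w hA ha)).trans (card_ballW w a D).le
  · exact Nat.zero_le _

lemma exists_diamW_le_card_eq_AstarW (D : ℕ) :
    ∃ A : Finset (Fin n → F), diamW w A ≤ D ∧ A.card = AstarW w n D := by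
  obtain ⟨A, -, hA⟩ := Finset.exists_mem_eq_sup Finset.univ Finset.univ_nonempty
    fun A : Finset (Fin n → F) => if diamW w A ≤ D then A.card else 0
  change AstarW w n D = _ at hA
  split_ifs at hA with hdiam
  · exact ⟨A, hdiam, hA.symm⟩
  · exact ⟨∅, by simp [diamW], by simp [hA]⟩

lemma AstarW_eq_card_ballW_iff (D : ℕ) :
    AstarW w n D = (ballW w (0 : Fin n → F) D).card ↔ diamW w (ballW w (0 : Fin n → F) D) ≤ D := by
  refine ⟨fun h => ?_, fun h => (AstarW_le_card_ballW w D).antisymm (card_le_AstarW w h)⟩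
  obtain ⟨A, hdiam, hcard⟩ := exists_diamW_le_card_eq_AstarW w (n := n) D
  obtain ⟨a, rfl⟩ := exists_eq_ballW_of_card_le w hdiam (by rw [hcard, h])
  rwa [diamW_ballW] at hdiam

end ChainWeight

open ChainWeight in
theorem stmt7_general {F : Type*} [Field F] [Fintype F] {n : ℕ}
    (w : F → ℕ) (D : ℕ)
    (hD : ∃ y : Fin n → F, chainWeight w y = D) :
    List.TFAE
      [∀ x : Fin n → F, diamW w (ballW w x D) = D,
       ∀ x : Fin n → F, diamW w (ballW w x D) ≤ D ∧
         (ballW w x D).card = AstarW w n D,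
       ∀ A : Finset (Fin n → F), diamW w A ≤ D → A.card = AstarW w n D →
         ∃ x : Fin n → F, A = ballW w x D,
       AstarW w n D = (ballW w (0 : Fin n → F) D).card] := by
  obtain ⟨y, rfl⟩ := hD
  tfae_have 1 → 4 := fun h1 => (AstarW_eq_card_ballW_iff w _).2 (h1 0).le
  tfae_have 4 → 2 := fun h4 x => by
    rw [diamW_ballW, card_ballW, h4]
    exact ⟨(AstarW_eq_card_ballW_iff w _).1 h4, rfl⟩
  tfae_have 2 → 3 := fun h2 A hA hcard =>
    exists_eq_ballW_of_card_le w hA (by rw [hcard, (h2 0).2])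
  tfae_have 3 → 1 := fun h3 x => by
    obtain ⟨A, hdiam, hcard⟩ := exists_diamW_le_card_eq_AstarW w (n := n) (chainWeight w y)
    obtain ⟨x₀, rfl⟩ := h3 A hdiam hcard
    have hlow := le_diamW_ballW w (y := y) x
    rw [diamW_ballW] at hdiam hlow ⊢
    exact hdiam.antisymm hlow
  tfae_finish

theorem stmt7 {F : Type*} [Field F] [Fintype F] {n : ℕ} (hn : 1 ≤ n)
    (w : F → ℕ) (hw : IsWeight w) (D : ℕ)
    (hD : ∃ y : Fin n → F, chainWeight w y = D) :
    List.TFAE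
      [∀ x : Fin n → F, diamW w (ballW w x D) = D,
       ∀ x : Fin n → F, diamW w (ballW w x D) ≤ D ∧
         (ballW w x D).card = AstarW w n D,
       ∀ A : Finset (Fin n → F), diamW w A ≤ D → A.card = AstarW w n D →
         ∃ x : Fin n → F, A = ballW w x D,
       AstarW w n D = (ballW w (0 : Fin n → F) D).card] :=
  stmt7_general w D hD
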